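/- Let (X, μ) be a measure space, 1 ≤ p < n, q = np/(n-p), and suppose u is a nonnegative measurable function such that for some constant C > 0 and every integer k, the truncation u_k = min(max(u-2^k,0), 2^k) satisfies λ^q μ({u_k ≥ λ}) ≤ C E(u_k)^{q/p} for all λ > 0, where E is a functional with ∑_k E(u_k) ≤ E(u). Then ∫ u^q dμ ≤ (np/(n-p)) · 2^{(2np+p-n)/(n-p)} · C · E(u)^{q/p}. -/

import Mathlib

/-!
The layer-cake formula `∫ u^q = q ∫₀^∞ t^(q-1) μ{u ≥ t} dt`, cut into the dyadic pieces
`[2^k, 2^(k+1))`, bounds `∫ u^q` by `q 2^(q-1) ∑ₖ 2^(kq) μ{u ≥ 2^k}`. The set `{u ≥ 2^(k+1)}` is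
exactly where the truncation `u_k` attains its maximum `2^k`, so the weak-type bound at `λ = 2^k`
controls the `k`-th term by `C E(u_k)^(q/p)`. Since `q/p ≥ 1`,
`∑ₖ E(u_k)^(q/p) ≤ (∑ₖ E(u_k))^(q/p) ≤ E(u)^(q/p)`.
-/

open MeasureTheory Set
open scoped ENNReal

theorem ENNReal.tsum_rpow_le_rpow_tsum {ι : Type*} (a : ι → ℝ≥0∞) {r : ℝ} (hr : 1 ≤ r) :
    ∑' i, a i ^ r ≤ (∑' i, a i) ^ r := by
  have hsplit : ∀ x : ℝ≥0∞, x ^ r = x ^ (r - 1) * x := fun x => by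
    conv_lhs => rw [← sub_add_cancel r 1]
    rw [ENNReal.rpow_add_of_nonneg _ _ (by linarith) zero_le_one, ENNReal.rpow_one]
  calc ∑' i, a i ^ r ≤ ∑' i, (∑' j, a j) ^ (r - 1) * a i := by
        refine ENNReal.tsum_le_tsum fun i => ?_
        rw [hsplit]
        gcongr
        exact ENNReal.le_tsum i
    _ = (∑' i, a i) ^ r := by rw [ENNReal.tsum_mul_left, ← hsplit]

section DyadicLayerCake

variable {X : Type*} [MeasurableSpace X] {μ : Measure X}

theorem setLIntegral_Ico_two_mul_meas_le_mul_rpow_le (f : X → ℝ) {a q : ℝ} (ha : 0 < a)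
    (hq : 1 ≤ q) :
    ∫⁻ t in Ico a (2 * a), μ {x | t ≤ f x} * ENNReal.ofReal (t ^ (q - 1))
      ≤ ENNReal.ofReal (2 ^ (q - 1)) * (ENNReal.ofReal (a ^ q) * μ {x | a ≤ f x}) := by
  have hbound : ∀ t ∈ Ico a (2 * a), μ {x | t ≤ f x} * ENNReal.ofReal (t ^ (q - 1))
      ≤ μ {x | a ≤ f x} * ENNReal.ofReal ((2 * a) ^ (q - 1)) := fun t ht => by
    gcongr μ ?_ * ENNReal.ofReal ?_
    · exact fun x hx => ht.1.trans hx
    · exact Real.rpow_le_rpow (ha.le.trans ht.1) ht.2.le (by linarith)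
  have harith : (2 * a) ^ (q - 1) * a = 2 ^ (q - 1) * a ^ q := by
    rw [Real.mul_rpow zero_le_two ha.le, Real.rpow_sub_one ha.ne']
    field_simp
  calc _ ≤ ∫⁻ _ in Ico a (2 * a), μ {x | a ≤ f x} * ENNReal.ofReal ((2 * a) ^ (q - 1)) :=
        setLIntegral_mono measurable_const hbound
    _ = _ := by
      rw [setLIntegral_const, Real.volume_Ico, show 2 * a - a = a by ring, mul_assoc,
        ← ENNReal.ofReal_mul (by positivity), harith, ENNReal.ofReal_mul (by positivity)]
      ring

theorem lintegral_rpow_le_tsum_zpow_mul_meas_le {f : X → ℝ} (hf0 : 0 ≤ᵐ[μ] f)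
    (hf : AEMeasurable f μ) {q : ℝ} (hq : 1 ≤ q) :
    ∫⁻ x, ENNReal.ofReal (f x ^ q) ∂μ ≤
      ENNReal.ofReal (q * 2 ^ (q - 1)) *
        ∑' k : ℤ, ENNReal.ofReal (((2 : ℝ) ^ k) ^ q) * μ {x | (2 : ℝ) ^ k ≤ f x} := by
  have hcover : Ioi (0 : ℝ) ⊆ ⋃ k : ℤ, Ico ((2 : ℝ) ^ k) (2 * 2 ^ k) := fun t ht => by
    obtain ⟨k, hk⟩ := exists_mem_Ico_zpow (mem_Ioi.mp ht) one_lt_two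
    rw [zpow_add_one₀ two_ne_zero, mul_comm] at hk
    exact mem_iUnion.2 ⟨k, hk⟩
  rw [lintegral_rpow_eq_lintegral_meas_le_mul μ hf0 hf (by linarith),
    ENNReal.ofReal_mul (by linarith), mul_assoc, ← ENNReal.tsum_mul_left]
  gcongr ENNReal.ofReal q * ?_
  calc _ ≤ ∫⁻ t in ⋃ k : ℤ, Ico ((2 : ℝ) ^ k) (2 * 2 ^ k),
        μ {x | t ≤ f x} * ENNReal.ofReal (t ^ (q - 1)) := lintegral_mono_set hcover
    _ ≤ _ := (lintegral_iUnion_le _ _).trans <| ENNReal.tsum_le_tsum fun k =>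
        setLIntegral_Ico_two_mul_meas_le_mul_rpow_le f (zpow_pos two_pos k) hq

end DyadicLayerCake

theorem setOf_le_min_max_sub_eq {X : Type*} (f : X → ℝ) {c : ℝ} (hc : 0 < c) :
    {x | c ≤ min (max (f x - c) 0) c} = {x | 2 * c ≤ f x} := by
  ext x
  simp only [mem_ofPred_eq, le_min_iff, le_refl, and_true, le_max_iff, hc.not_ge, or_false]
  constructor <;> intro h <;> linarith

theorem tsum_zpow_rpow_mul_meas_le_eq_two_rpow_mul_tsum_truncation {X : Type*} [MeasurableSpace X]
    (μ : Measure X) (f : X → ℝ) (q : ℝ) :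
    ∑' k : ℤ, ENNReal.ofReal (((2 : ℝ) ^ k) ^ q) * μ {x | (2 : ℝ) ^ k ≤ f x} =
      ENNReal.ofReal (2 ^ q) * ∑' k : ℤ, ENNReal.ofReal (((2 : ℝ) ^ k) ^ q) *
        μ {x | (2 : ℝ) ^ k ≤ min (max (f x - 2 ^ k) 0) (2 ^ k)} := by
  rw [← (Equiv.addRight (1 : ℤ)).tsum_eq, ← ENNReal.tsum_mul_left]
  refine tsum_congr fun k => ?_
  have h2k : (0 : ℝ) < 2 ^ k := zpow_pos two_pos k
  rw [Equiv.coe_addRight, zpow_add_one₀ two_ne_zero, mul_comm _ (2 : ℝ),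
    ← setOf_le_min_max_sub_eq f h2k, Real.mul_rpow zero_le_two h2k.le,
    ENNReal.ofReal_mul (by positivity), mul_assoc]

theorem stmt_4_general {X : Type*} [MeasurableSpace X] (μ : Measure X)
    (u : X → ℝ) (hu : Measurable u) (hu0 : ∀ x, 0 ≤ u x)
    (n p : ℝ) (hp : 1 ≤ p) (hpn : p < n)
    (C : ℝ) (E : (X → ℝ) → ℝ≥0∞)
    (hweak : ∀ k : ℤ, ∀ lam : ℝ, 0 < lam →
      ENNReal.ofReal (lam ^ (n * p / (n - p))) *
          μ {x | lam ≤ min (max (u x - 2 ^ k) 0) (2 ^ k)}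
        ≤ ENNReal.ofReal C *
            (E (fun x => min (max (u x - 2 ^ k) 0) (2 ^ k))) ^ ((n * p / (n - p)) / p))
    (hsub : ∑' k : ℤ, E (fun x => min (max (u x - 2 ^ k) 0) (2 ^ k)) ≤ E u) :
    ∫⁻ x, ENNReal.ofReal (u x ^ (n * p / (n - p))) ∂μ
      ≤ ENNReal.ofReal (n * p / (n - p) * 2 ^ ((2 * n * p + p - n) / (n - p)) * C) *
          (E u) ^ ((n * p / (n - p)) / p) := by
  set q := n * p / (n - p) with hq_def
  have hnp : 0 < n - p := by linarith
  have hq : 1 ≤ q := by rw [le_div_iff₀ hnp]; nlinarith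
  have hqp : 1 ≤ q / p := by rw [div_div, le_div_iff₀ (by positivity)]; nlinarith
  have hexp : (2 * n * p + p - n) / (n - p) = (q - 1) + q := by
    rw [hq_def]; field_simp; ring
  set e : ℤ → ℝ≥0∞ := fun k => E fun x => min (max (u x - 2 ^ k) 0) (2 ^ k)
  calc _ ≤ ENNReal.ofReal (q * 2 ^ (q - 1)) *
        ∑' k : ℤ, ENNReal.ofReal (((2 : ℝ) ^ k) ^ q) * μ {x | (2 : ℝ) ^ k ≤ u x} :=
        lintegral_rpow_le_tsum_zpow_mul_meas_le (ae_of_all _ hu0) hu.aemeasurable hq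
    _ ≤ ENNReal.ofReal (q * 2 ^ (q - 1)) *
        (ENNReal.ofReal (2 ^ q) * ∑' k : ℤ, ENNReal.ofReal C * e k ^ (q / p)) := by
      rw [tsum_zpow_rpow_mul_meas_le_eq_two_rpow_mul_tsum_truncation]
      exact mul_le_mul_right (mul_le_mul_right
        (ENNReal.tsum_le_tsum fun k => hweak k _ (zpow_pos two_pos k)) _) _
    _ ≤ ENNReal.ofReal (q * 2 ^ (q - 1)) *
        (ENNReal.ofReal (2 ^ q) * (ENNReal.ofReal C * E u ^ (q / p))) := by
      rw [ENNReal.tsum_mul_left]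
      gcongr
      exact (ENNReal.tsum_rpow_le_rpow_tsum e hqp).trans
        (ENNReal.rpow_le_rpow hsub (by positivity))
    _ = _ := by
      rw [hexp, Real.rpow_add two_pos, ENNReal.ofReal_mul (by positivity),
        ENNReal.ofReal_mul (by positivity), ENNReal.ofReal_mul (by positivity),
        ENNReal.ofReal_mul (by positivity)]
      ring

theorem stmt_4 {X : Type*} [MeasurableSpace X] (μ : Measure X)
    (u : X → ℝ) (hu : Measurable u) (hu0 : ∀ x, 0 ≤ u x)
    (n p : ℝ) (hp : 1 ≤ p) (hpn : p < n)
    (C : ℝ) (hC : 0 < C) (E : (X → ℝ) → ℝ≥0∞)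
    (hweak : ∀ k : ℤ, ∀ lam : ℝ, 0 < lam →
      ENNReal.ofReal (lam ^ (n * p / (n - p))) *
          μ {x | lam ≤ min (max (u x - 2 ^ k) 0) (2 ^ k)}
        ≤ ENNReal.ofReal C *
            (E (fun x => min (max (u x - 2 ^ k) 0) (2 ^ k))) ^ ((n * p / (n - p)) / p))
    (hsub : ∑' k : ℤ, E (fun x => min (max (u x - 2 ^ k) 0) (2 ^ k)) ≤ E u) :
    ∫⁻ x, ENNReal.ofReal (u x ^ (n * p / (n - p))) ∂μ
      ≤ ENNReal.ofReal (n * p / (n - p) * 2 ^ ((2 * n * p + p - n) / (n - p)) * C) *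
          (E u) ^ ((n * p / (n - p)) / p) :=
  stmt_4_general μ u hu hu0 n p hp hpn C E hweak hsub
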